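/- arXiv:1202.5925 — 6 statements merged into one kernel-verified Lean document; each statement's English description precedes it below -/
import Mathlib

section
/- Fix integers m ≥ 1 and n ≥ 1 and a permutation σ ∈ S_n with ℓ cycles. The number of labelled m-ballot paths of size n fixed under the action of σ — equivalently, the number of (1,m,…,m)-parking functions f : {1,…,n} → ℕ that are constant on every cycle of σ — equals (mn+1)^{ℓ−1}. -/
/-- The cycles of a permutation, as the quotient by the `SameCycle` relation. -/
def Cycles {n : ℕ} (σ : Equiv.Perm (Fin n)) : Type :=
  Quotient (Equiv.Perm.SameCycle.setoid σ)

/-- The number of cycles of a permutation (fixed points count as cycles). -/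
noncomputable def numCycles {n : ℕ} (σ : Equiv.Perm (Fin n)) : ℕ :=
  Nat.card (Cycles σ)

/-- `f : {1,…,n} → ℕ` is a `(1,m,…,m)`-parking function: for every `j ∈ {1,…,n}` at
least `j` of the values `f(1), …, f(n)` are `≤ m(j−1)`. -/
def IsMParking (m n : ℕ) (f : Fin n → ℕ) : Prop :=
  ∀ j : ℕ, 1 ≤ j → j ≤ n →
    j ≤ (Finset.univ.filter fun i : Fin n => f i ≤ m * (j - 1)).card

/-!
Pollak's cycle argument. Put `N = mn + 1`. For `a : Fin n → ZMod N`, exactly one shift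
`c : ZMod N` makes `i ↦ (a i - c).val` a parking function: the parking condition for the
shift by `c` says that the walk `t ↦ m · #{lifts of the a i below t} - t` never drops below
its value at `c.val` during one period, and since the walk drifts by `mn - N = -1` per period,
exactly one starting point in a period has this property. Hence
`(fixed parking functions) × ZMod N` is in bijection with the `σ`-invariant maps
`Fin n → ZMod N`, of which there are `N ^ ℓ`.
-/

open Finset

namespace MParking

variable {m n : ℕ}

theorem _root_.IsMParking.lt {f : Fin n → ℕ} (hf : IsMParking m n f) (i : Fin n) :
    f i < m * n + 1 := by
  have hn : 0 < n := i.pos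
  have hall : #{k | f k ≤ m * (n - 1)} = #(univ : Finset (Fin n)) :=
    le_antisymm (card_le_univ _) (by simpa using hf n hn le_rfl)
  have hi := (card_filter_eq_iff.1 hall) i (mem_univ i)
  have : m * (n - 1) ≤ m * n := Nat.mul_le_mul_left m (Nat.sub_le n 1)
  omega

theorem isMParking_iff_forall_le_mul_card {f : Fin n → ℕ} (hf : ∀ i, f i < m * n + 1) :
    IsMParking m n f ↔ ∀ s, 0 < s → s < m * n + 1 → s ≤ m * #{i | f i < s} := by
  constructor
  · intro h s hs hsN
    have hm : 0 < m := Nat.pos_of_ne_zero (by rintro rfl; omega)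
    have hj : (s - 1) / m < n := (Nat.div_lt_iff_lt_mul hm).2 (by rw [Nat.mul_comm]; omega)
    have hcount := h ((s - 1) / m + 1) (Nat.le_add_left 1 _) hj
    have hsub : #{i | f i ≤ m * ((s - 1) / m + 1 - 1)} ≤ #{i | f i < s} := by
      refine card_le_card fun i => ?_
      simp only [mem_filter, mem_univ, true_and, Nat.add_sub_cancel]
      have := Nat.mul_div_le (s - 1) m
      omega
    have hs_le : s ≤ m * ((s - 1) / m + 1) := by
      have := Nat.lt_mul_div_succ (s - 1) hm
      omega
    exact hs_le.trans (Nat.mul_le_mul_left m (hcount.trans hsub))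
  · intro h j hj hjn
    rcases Nat.eq_zero_or_pos m with rfl | hm
    · have hall : ∀ i, f i ≤ 0 * (j - 1) := fun i => by have := hf i; omega
      rwa [filter_true_of_mem fun i _ => hall i, card_univ, Fintype.card_fin]
    · have hs : m * (j - 1) + 1 < m * n + 1 := by
        have := Nat.mul_lt_mul_of_pos_left (show j - 1 < n by omega) hm
        omega
      have hcount := h (m * (j - 1) + 1) (Nat.succ_pos _) hs
      simp only [Nat.lt_succ_iff] at hcount
      have : j - 1 < #{i | f i ≤ m * (j - 1)} :=
        Nat.lt_of_mul_lt_mul_left (a := m) (by omega)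
      omega

theorem existsUnique_lt_forall_le_add {N : ℕ} (hN : 0 < N) {W : ℕ → ℤ}
    (hW : ∀ t, W (t + N) = W t - 1) :
    ∃! u, u < N ∧ ∀ s, 0 < s → s < N → W u ≤ W (u + s) := by
  have hmin : ∃ u, u < N ∧ ∀ t < N, W u ≤ W t := by
    obtain ⟨u, hu, hmin⟩ := exists_min_image (range N) W ⟨0, mem_range.2 hN⟩
    exact ⟨u, mem_range.1 hu, fun t ht => hmin t (mem_range.2 ht)⟩
  -- `u` is the first point of the period where the walk attains its minimum
  obtain ⟨hu, humin⟩ := Nat.find_spec hmin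
  set u := Nat.find hmin
  have hbefore : ∀ v < u, W u < W v := fun v hv => by
    have := Nat.find_min hmin hv
    simp only [not_and, not_forall, not_le, exists_prop] at this
    obtain ⟨t, ht, hlt⟩ := this (hv.trans hu)
    exact (humin t ht).trans_lt hlt
  refine ⟨u, ⟨hu, fun s _ _ => ?_⟩, fun v ⟨hv, hgood⟩ => ?_⟩
  · rcases lt_or_ge (u + s) N with h | h
    · exact humin _ h
    · have := hbefore (u + s - N) (by omega)
      rw [show u + s = u + s - N + N by omega, hW]
      omega
  · by_contra hne
    rcases lt_or_gt_of_ne hne with h | h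
    · have := hgood (u - v) (by omega) (by omega)
      rw [Nat.add_sub_cancel' h.le] at this
      exact absurd (hbefore v h) this.not_gt
    · have := hgood (u + N - v) (by omega) (by omega)
      rw [show v + (u + N - v) = u + N by omega, hW] at this
      have := humin v hv
      omega

section LiftCount

variable {N : ℕ} [NeZero N]

/-- The number of `k : ℕ` with `x.val + k * N < t`. -/
def liftCount (x : ZMod N) (t : ℕ) : ℕ :=
  (t + N - 1 - x.val) / N

theorem liftCount_add_period (x : ZMod N) (t : ℕ) :
    liftCount x (t + N) = liftCount x t + 1 := by
  have := x.val_lt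
  rw [liftCount, liftCount, show t + N + N - 1 - x.val = t + N - 1 - x.val + N by omega,
    Nat.add_div_right _ (NeZero.pos N)]

theorem liftCount_of_le (x : ZMod N) {s : ℕ} (hs : s ≤ N) :
    liftCount x s = if x.val < s then 1 else 0 := by
  have := x.val_lt
  unfold liftCount
  split_ifs with h
  · exact Nat.div_eq_of_lt_le (by omega) (by omega)
  · exact Nat.div_eq_of_lt (by omega)

theorem liftCount_val_add (x y : ZMod N) (s : ℕ) :
    liftCount x (y.val + s) = liftCount x y.val + liftCount (x - y) s := by
  have hx := x.val_lt
  have hw := (x - y).val_lt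
  have hxy : y + (x - y) = x := add_sub_cancel y x
  unfold liftCount
  rcases lt_or_ge (y.val + (x - y).val) N with h | h
  · rw [← hxy, ZMod.val_add_of_lt h, hxy, Nat.div_eq_of_lt (a := y.val + N - 1 - _) (by omega),
      zero_add]
    congr 1
    omega
  · have hwrap := ZMod.val_add_val_of_le h
    rw [hxy] at hwrap
    rw [Nat.div_eq_of_lt_le (k := 1) (m := y.val + N - 1 - x.val) (by omega) (by omega),
      show y.val + s + N - 1 - x.val = s + N - 1 - (x - y).val + N by omega,
      Nat.add_div_right _ (NeZero.pos N), add_comm]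

end LiftCount

def walk (m : ℕ) (a : Fin n → ZMod (m * n + 1)) (t : ℕ) : ℤ :=
  m * ∑ i, (liftCount (a i) t : ℤ) - t

theorem walk_add_period (a : Fin n → ZMod (m * n + 1)) (t : ℕ) :
    walk m a (t + (m * n + 1)) = walk m a t - 1 := by
  simp only [walk, liftCount_add_period, Nat.cast_add, Nat.cast_one, sum_add_distrib, sum_const,
    card_univ, Fintype.card_fin, nsmul_eq_mul, mul_one]
  push_cast
  ring

theorem walk_val_add (a : Fin n → ZMod (m * n + 1)) (y : ZMod (m * n + 1)) {s : ℕ}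
    (hs : s ≤ m * n + 1) :
    walk m a (y.val + s) = walk m a y.val + (m * #{i | (a i - y).val < s} - s) := by
  simp only [walk, liftCount_val_add, liftCount_of_le _ hs, card_filter, Nat.cast_add,
    sum_add_distrib, Nat.cast_sum, Nat.cast_ite, Nat.cast_one, Nat.cast_zero]
  ring

theorem isMParking_sub_iff (a : Fin n → ZMod (m * n + 1)) (y : ZMod (m * n + 1)) :
    IsMParking m n (fun i => (a i - y).val) ↔
      ∀ s, 0 < s → s < m * n + 1 → walk m a y.val ≤ walk m a (y.val + s) := by
  rw [isMParking_iff_forall_le_mul_card fun i => (a i - y).val_lt]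
  refine forall₃_congr fun s _ hs => ?_
  rw [walk_val_add a y hs.le]
  omega

theorem existsUnique_isMParking_sub (a : Fin n → ZMod (m * n + 1)) :
    ∃! y : ZMod (m * n + 1), IsMParking m n (fun i => (a i - y).val) := by
  obtain ⟨u, ⟨hu, hgood⟩, huniq⟩ :=
    existsUnique_lt_forall_le_add (Nat.add_one_pos (m * n)) (walk_add_period a)
  have hval : (u : ZMod (m * n + 1)).val = u := ZMod.val_cast_of_lt hu
  refine ⟨u, (isMParking_sub_iff a _).2 ?_, fun y hy => ?_⟩
  · rwa [hval]
  · rw [← ZMod.natCast_zmod_val y, huniq y.val ⟨y.val_lt, (isMParking_sub_iff a y).1 hy⟩]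

theorem apply_eq_of_sameCycle {α β : Type*} {σ : Equiv.Perm α} {a : α → β}
    (ha : ∀ i, a (σ i) = a i) {i j : α} (h : σ.SameCycle i j) : a i = a j := by
  obtain ⟨k, rfl⟩ := h
  induction k using Int.induction_on with
  | zero => rfl
  | succ k ih => rw [ih, add_comm, zpow_add, zpow_one, Equiv.Perm.mul_apply, ha]
  | pred k ih =>
    rw [ih, ← ha ((σ ^ (-(k : ℤ) - 1)) i), ← Equiv.Perm.mul_apply, ← zpow_one_add,
      add_sub_cancel]

theorem card_invariant_fun (σ : Equiv.Perm (Fin n)) (β : Type*) :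
    Nat.card {a : Fin n → β // ∀ i, a (σ i) = a i} = Nat.card β ^ numCycles σ := by
  have : Finite (Cycles σ) := Quotient.finite _
  rw [numCycles, ← Nat.card_fun]
  symm
  refine Nat.card_eq_of_bijective
    (fun g => ⟨fun i => g (Quotient.mk _ i), fun i => congrArg g (Quotient.sound
      (Equiv.Perm.SameCycle.refl σ i).apply_left)⟩) ⟨fun g₁ g₂ h => ?_, fun ⟨a, ha⟩ => ?_⟩
  · funext q
    induction q using Quotient.ind with
    | _ i => exact congrFun (congrArg Subtype.val h) i
  · exact ⟨Quotient.lift a fun i j h => apply_eq_of_sameCycle ha h, rfl⟩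

theorem card_fixed_isMParking_mul (σ : Equiv.Perm (Fin n)) :
    Nat.card {f : Fin n → ℕ // IsMParking m n f ∧ ∀ i, f (σ i) = f i} * (m * n + 1) =
      Nat.card {a : Fin n → ZMod (m * n + 1) // ∀ i, a (σ i) = a i} := by
  let F : {f : Fin n → ℕ // IsMParking m n f ∧ ∀ i, f (σ i) = f i} × ZMod (m * n + 1) →
      {a : Fin n → ZMod (m * n + 1) // ∀ i, a (σ i) = a i} :=
    fun p => ⟨fun i => (p.1.1 i : ZMod (m * n + 1)) + p.2, fun i => by simp only [p.1.2.2 i]⟩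
  suffices hF : F.Bijective by
    rw [← Nat.card_eq_of_bijective F hF, Nat.card_prod, Nat.card_zmod]
  refine ⟨?_, ?_⟩
  · rintro ⟨⟨f, hf, _⟩, c⟩ ⟨⟨g, hg, _⟩, d⟩ h
    have hfg : ∀ i, (f i : ZMod (m * n + 1)) + c = g i + d := fun i =>
      congrFun (congrArg Subtype.val h) i
    have hf' : (fun i => ((f i : ZMod (m * n + 1)) + c - c).val) = f :=
      funext fun i => by rw [add_sub_cancel_right, ZMod.val_cast_of_lt (hf.lt i)]
    have hg' : (fun i => ((f i : ZMod (m * n + 1)) + c - d).val) = g :=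
      funext fun i => by rw [hfg, add_sub_cancel_right, ZMod.val_cast_of_lt (hg.lt i)]
    obtain rfl : c = d := (existsUnique_isMParking_sub _).unique (hf' ▸ hf) (hg' ▸ hg)
    obtain rfl : f = g := hf'.symm.trans hg'
    rfl
  · rintro ⟨a, ha⟩
    obtain ⟨y, hy, -⟩ := existsUnique_isMParking_sub a
    refine ⟨⟨⟨fun i => (a i - y).val, hy, fun i => by simp only [ha i]⟩, y⟩, ?_⟩
    ext i
    exact (congrArg (· + y) (ZMod.natCast_zmod_val _)).trans (sub_add_cancel _ _)

end MParking

open MParking in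
theorem card_parking_functions_fixed_general (m n : ℕ)
    (σ : Equiv.Perm (Fin n)) :
    (Nat.card {f : Fin n → ℕ // IsMParking m n f ∧ ∀ i, f (σ i) = f i} : ℚ)
      = (m * n + 1 : ℚ) ^ ((numCycles σ : ℤ) - 1) := by
  have hN : (m * n + 1 : ℚ) ≠ 0 := by positivity
  have key := card_fixed_isMParking_mul (m := m) σ
  rw [card_invariant_fun, Nat.card_zmod] at key
  rw [zpow_sub_one₀ hN, zpow_natCast, eq_mul_inv_iff_mul_eq₀ hN]
  exact_mod_cast key

/-- **(Cycle lemma count.)**  Fix `m, n ≥ 1` and a permutation `σ ∈ S_n` with `ℓ`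
cycles.  The number of `(1,m,…,m)`-parking functions of size `n` that are constant on
every cycle of `σ` — equivalently, the number of labelled `m`-ballot paths of size `n`
fixed under the action of `σ` — equals `(mn+1)^{ℓ−1}`. -/
theorem card_parking_functions_fixed (m n : ℕ) (hm : 1 ≤ m) (hn : 1 ≤ n)
    (σ : Equiv.Perm (Fin n)) :
    (Nat.card {f : Fin n → ℕ // IsMParking m n f ∧ ∀ i, f (σ i) = f i} : ℚ)
      = (m * n + 1 : ℚ) ^ ((numCycles σ : ℤ) - 1) :=
  card_parking_functions_fixed_general m n σ
end

section
/- Let R be a commutative ring. In the Laurent polynomial ring R[u, u^{−1}], set v = (1+u)(1+u^{−1}) and let T be the R-linear operator T(X) = v · (X − ε(X)), where ε(X) denotes the coefficient of u^0 in X. Then for every polynomial H ∈ R[u] and every k ≥ 0 there exists a polynomial P_k ∈ R[w] in one variable such that T^{(k)}(H) = v^k H − P_k(v); that is, T^{(k)}(H) − (1+u)^k (1+u^{−1})^k H lies in the R-subalgebra of R[u,u^{−1}] generated by v. -/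
open LaurentPolynomial

/-- The constant (coefficient of `u^0`) of a Laurent polynomial. -/
noncomputable def constCoeffL {R : Type*} [CommRing R] (f : R[T;T⁻¹]) : R :=
  (LaurentPolynomial.trunc f).coeff 0

/-- The operator `T(X) = v · (X − ε(X))` on `R[u,u⁻¹]`, where
`v = (1+u)(1+u⁻¹)` and `ε(X)` is the coefficient of `u^0` in `X`. -/
noncomputable def tamariOp {R : Type*} [CommRing R] (f : R[T;T⁻¹]) : R[T;T⁻¹] :=
  (1 + T 1) * (1 + T (-1)) * (f - LaurentPolynomial.C (constCoeffL f))

/-- Let `R` be a commutative ring, `v = (1+u)(1+u⁻¹)` in `R[u,u⁻¹]` and let `T` be the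
operator `T(X) = v (X − ε(X))`, where `ε` extracts the coefficient of `u^0`.  For every
polynomial `H ∈ R[u]` and every `k ≥ 0` there is a polynomial `P_k ∈ R[w]` such that
`T^{(k)}(H) = v^k H − P_k(v)`. -/
theorem tamariOp_iterate_eq_vpow_sub_poly (R : Type*) [CommRing R]
    (H : Polynomial R) (k : ℕ) :
    ∃ P : Polynomial R,
      tamariOp^[k] (Polynomial.toLaurent H)
        = ((1 + T 1) * (1 + T (-1))) ^ k * Polynomial.toLaurent H
          - Polynomial.eval₂ LaurentPolynomial.C ((1 + T 1) * (1 + T (-1))) P := by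
  induction k with
  | zero =>
    exact ⟨0, by simp⟩
  | succ k ih =>
    obtain ⟨P, hP⟩ := ih
    set v : R[T;T⁻¹] := (1 + T 1) * (1 + T (-1)) with hv
    set X : R[T;T⁻¹] := v ^ k * Polynomial.toLaurent H - Polynomial.eval₂ LaurentPolynomial.C v P with hX
    refine ⟨Polynomial.X * (P + Polynomial.C (constCoeffL X)), ?_⟩
    rw [Function.iterate_succ_apply', hP]
    show v * (X - LaurentPolynomial.C (constCoeffL X)) = _
    rw [Polynomial.eval₂_mul, Polynomial.eval₂_add, Polynomial.eval₂_X, Polynomial.eval₂_C, hX]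
    ring
end

section
/- Let m ≥ 1 and let F be a field of characteristic zero. In the rational function field F(u), set v = (1+u)^{m+1} u^{−m}. Then the polynomial (1+U)^{m+1} − v·U^m ∈ F(u)[U] has no repeated root; equivalently, it is separable and has m+1 pairwise distinct roots in any splitting field over F(u). -/
/-!
With `P = (1 + U)^(m+1) - v U^m` one has `U P' - m P = (1 + U)^m (U - m)`, so a common factor of
`P` and `P'` would vanish at `-1` or at `m`. But `P(-1) = -v (-1)^m` and
`P(m) = (m+1)^(m+1) - v m^m`, and neither vanishes because `v = (1+u)^(m+1) / u^m` is nonzero and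
not a constant of `F(u)`.
-/

open Polynomial

noncomputable def tamariPoly {R : Type*} [CommRing R] (v : R) (m : ℕ) : R[X] :=
  (1 + X) ^ (m + 1) - C v * X ^ m

section CommRing

variable {R : Type*} [CommRing R] (v : R) (m : ℕ)

theorem natDegree_tamariPoly [Nontrivial R] : (tamariPoly v m).natDegree = m + 1 := by
  have hlead : ((1 + X : R[X]) ^ (m + 1)).natDegree = m + 1 := by
    rw [add_comm, ← C_1, natDegree_pow_X_add_C]
  rw [tamariPoly, natDegree_sub_eq_left_of_natDegree_lt]
  · exact hlead
  · rw [hlead]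
    exact (natDegree_C_mul_X_pow_le v m).trans_lt m.lt_succ_self

theorem X_mul_derivative_tamariPoly_sub :
    X * derivative (tamariPoly v m) - C (m : R) * tamariPoly v m =
      (1 + X) ^ m * (X - C (m : R)) := by
  cases m with
  | zero => simp [tamariPoly]
  | succ k =>
    simp only [tamariPoly, derivative_sub, derivative_pow, derivative_add, derivative_one,
      derivative_X, derivative_C_mul_X_pow, C_mul, map_natCast, Nat.add_sub_cancel]
    push_cast
    ring

theorem eval_neg_one_tamariPoly : (tamariPoly v m).eval (-1) = -(v * (-1) ^ m) := by
  simp [tamariPoly]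

theorem eval_natCast_tamariPoly :
    (tamariPoly v m).eval (m : R) = (m + 1) ^ (m + 1) - v * m ^ m := by
  simp [tamariPoly, add_comm]

end CommRing

section Field

variable {K : Type*} [Field K]

theorem separable_tamariPoly {v : K} {m : ℕ} (hv₀ : v ≠ 0)
    (hv : v * m ^ m ≠ (m + 1) ^ (m + 1)) : (tamariPoly v m).Separable := by
  have coprime_of_not_root {a : K} (ha : (tamariPoly v m).eval a ≠ 0) :
      IsCoprime (tamariPoly v m) (X - C a) :=
    ((irreducible_X_sub_C a).coprime_iff_not_dvd.2 (mt dvd_iff_isRoot.1 ha)).symm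
  have h_neg_one : IsCoprime (tamariPoly v m) (1 + X) := by
    have := coprime_of_not_root (a := -1) <| by
      rw [eval_neg_one_tamariPoly, neg_ne_zero]
      exact mul_ne_zero hv₀ (pow_ne_zero _ (neg_ne_zero.2 one_ne_zero))
    rwa [map_neg, map_one, sub_neg_eq_add, add_comm] at this
  have h_m : IsCoprime (tamariPoly v m) (X - C (m : K)) :=
    coprime_of_not_root (by rw [eval_natCast_tamariPoly, sub_ne_zero]; exact hv.symm)
  have hcop := (h_neg_one.pow_right (n := m)).mul_right h_m
  rw [← X_mul_derivative_tamariPoly_sub, sub_eq_add_neg, ← neg_mul, mul_comm (-C _)] at hcop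
  exact hcop.of_add_mul_left_right.of_mul_right_right

theorem card_aroots_splittingField (p : K[X]) :
    (p.aroots p.SplittingField).card = p.natDegree := by
  rw [aroots_def, ← (SplittingField.splits p).natDegree_eq_card_roots, natDegree_map]

theorem C_mul_one_add_X_pow_ne_C_mul_X_pow (m : ℕ) :
    C ((m : K) ^ m) * (1 + X) ^ (m + 1) ≠ C (((m : K) + 1) ^ (m + 1)) * X ^ m := by
  intro h
  have hm₁ : (m + 1 : K) = 0 := by
    simpa using congrArg (eval (-1)) h
  have hm₀ : (m : K) = 0 := by
    have := congrArg (coeff · (m + 1)) h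
    simp only [coeff_C_mul, coeff_one_add_X_pow, Nat.choose_self, Nat.cast_one, mul_one,
      coeff_X_pow, if_neg m.succ_ne_self, mul_zero] at this
    exact (pow_eq_zero_iff'.1 this).1
  exact one_ne_zero (by linear_combination hm₁ - hm₀ : (1 : K) = 0)

end Field

namespace RatFunc

variable {F : Type*} [Field F]

theorem one_add_X_pow_div_X_pow_ne_zero (m : ℕ) :
    (1 + X) ^ (m + 1) / X ^ m ≠ (0 : RatFunc F) := by
  have h : (1 + X : RatFunc F) ≠ 0 := by
    rw [← algebraMap_X, ← map_one (algebraMap F[X] _), ← map_add]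
    exact (map_ne_zero_iff _ (algebraMap_injective F)).2 <| by
      simpa [add_comm] using X_add_C_ne_zero (1 : F)
  exact div_ne_zero (pow_ne_zero _ h) (pow_ne_zero _ X_ne_zero)

theorem one_add_X_pow_div_X_pow_mul_ne (m : ℕ) :
    (1 + X) ^ (m + 1) / X ^ m * (m : RatFunc F) ^ m ≠ ((m : RatFunc F) + 1) ^ (m + 1) := by
  rw [div_mul_eq_mul_div, Ne, div_eq_iff (pow_ne_zero _ X_ne_zero), mul_comm]
  intro h
  refine C_mul_one_add_X_pow_ne_C_mul_X_pow (K := F) m (algebraMap_injective F ?_)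
  simpa [← algebraMap_X] using h

end RatFunc

theorem tamari_root_poly_separable_general (F : Type*) [Field F] (m : ℕ) :
    letI v : RatFunc F := (1 + RatFunc.X) ^ (m + 1) / RatFunc.X ^ m
    letI P : Polynomial (RatFunc F) := (1 + X) ^ (m + 1) - C v * X ^ m
    P.Separable ∧ (P.aroots P.SplittingField).card = m + 1 ∧
      (P.aroots P.SplittingField).Nodup := by
  have hsep := separable_tamariPoly (RatFunc.one_add_X_pow_div_X_pow_ne_zero (F := F) m)
    (RatFunc.one_add_X_pow_div_X_pow_mul_ne m)
  refine ⟨hsep, ?_, nodup_roots hsep.map⟩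
  rw [card_aroots_splittingField]
  exact natDegree_tamariPoly _ m

/-- Let `m ≥ 1` and let `F` be a field of characteristic zero.  In `F(u)`, set
`v = (1+u)^{m+1} u^{−m}`.  Then the polynomial `(1+U)^{m+1} − v·U^m` over `F(u)` has no
repeated root: it is separable, and in its splitting field it has `m+1` pairwise distinct
roots. -/
theorem tamari_root_poly_separable (F : Type*) [Field F] [CharZero F] (m : ℕ) (hm : 1 ≤ m) :
    letI v : RatFunc F := (1 + RatFunc.X) ^ (m + 1) / RatFunc.X ^ m
    letI P : Polynomial (RatFunc F) := (1 + X) ^ (m + 1) - C v * X ^ m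
    P.Separable ∧ (P.aroots P.SplittingField).card = m + 1 ∧
      (P.aroots P.SplittingField).Nodup :=
  tamari_root_poly_separable_general F m
end

section
/- Let m ≥ 1, let F be a field of characteristic zero, set v = (1+u)^{m+1} u^{−m} ∈ F(u), and let u_0 = u, u_1, …, u_m be the m+1 distinct roots of (1+U)^{m+1} − v U^m in a splitting field over F(u). Then for every k ≥ 1, Σ_{i=0}^{m} Σ_{j=1}^{k} binom((m+1)k, k−j) u_i^{j} = v^k − binom((m+1)k, k). (Equivalently, with V(v) = Σ_{k≥1}(p_k/k) v^k z^k, L = Σ_{k≥1}(p_k/k) binom((m+1)k,k) z^k and K(x) = Σ_{k≥1}(p_k/k) z^k Σ_{j=1}^{k} binom((m+1)k,k−j) x^j, one has V(v) = L + Σ_{i=0}^{m} K(u_i).) -/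
/-!
Let `g = ∏ᵢ (1 - uᵢX)`. The `uᵢ` are all the roots of the monic `(X + 1)^(m+1) - vX^m`, whose
reflection is `g`, so `g = (1 + X)^(m+1) - vX`. The left-hand side is the coefficient of `X^k` in
`(1 + X)^((m+1)k) · ∑ᵢ uᵢX / (1 - uᵢX)`, and the logarithmic derivative gives
`∑ᵢ uᵢX / (1 - uᵢX) = -Xg'/g = (1 + X)^m (1 - mX) / g - 1`. Finally the coefficient of `X^k` in
`(1 + X)^((m+1)k+m) (1 - mX) / g` is `v^k`: expanding `1/g` geometrically in `vX / (1 + X)^(m+1)`,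
the `r`-th term contributes `v^r` times the coefficient of `X^s` in `(1 - mX)(1 + X)^((m+1)s-1)`,
`s = k - r`, and `binom((m+1)s-1, s) = m · binom((m+1)s-1, s-1)` kills every term with `s ≥ 1`.
-/

open Finset

theorem Nat.choose_mul_add_succ (m s : ℕ) :
    (m * (s + 1) + s).choose (s + 1) = m * (m * (s + 1) + s).choose s := by
  have h := Nat.choose_succ_right_eq (m * (s + 1) + s) s
  rw [Nat.add_sub_cancel] at h
  exact Nat.eq_of_mul_eq_mul_right (show 0 < s + 1 by omega) (h.trans (by ring))

namespace Polynomial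

variable {R : Type*} [CommRing R]

theorem reflect_X_add_one_pow (n : ℕ) : reflect n ((X + 1 : R[X]) ^ n) = (X + 1) ^ n := by
  ext i
  rw [coeff_reflect, coeff_X_add_one_pow, coeff_X_add_one_pow]
  rcases le_or_gt i n with h | h
  · rw [revAt_le h, Nat.choose_symm h]
  · rw [revAt_eq_self_of_lt h]

theorem reflect_prod_X_sub_C {ι : Type*} (s : Finset ι) (u : ι → R) :
    reflect #s (∏ i ∈ s, (X - C (u i))) = ∏ i ∈ s, (1 - C (u i) * X) := by
  classical
  induction s using Finset.induction_on with
  | empty => simp [reflect_one]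
  | insert a s ha ih =>
    rw [prod_insert ha, prod_insert ha, card_insert_of_notMem ha, add_comm,
      reflect_mul _ _ (natDegree_X_sub_C_le _) ?_, ih, reflect_sub, reflect_one_X, reflect_C,
      pow_one]
    exact (natDegree_prod_le _ _).trans
      (by simpa using sum_le_card_nsmul s _ 1 fun i _ => natDegree_X_sub_C_le (u i))

theorem prod_X_sub_C_eq_of_monic [IsDomain R] {ι : Type*} [Fintype ι] {p : R[X]} (hp : p.Monic)
    (hdeg : p.natDegree = Fintype.card ι) {u : ι → R} (hu : Function.Injective u)
    (hroot : ∀ i, p.IsRoot (u i)) : ∏ i, (X - C (u i)) = p := by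
  classical
  have hq : (∏ i, (X - C (u i))).Monic := monic_prod_X_sub_C u univ
  have hqdeg : (∏ i, (X - C (u i))).natDegree = Fintype.card ι := by
    rw [natDegree_prod_of_monic _ _ fun i _ => monic_X_sub_C (u i)]
    simp
  refine eq_of_degree_sub_lt_of_eval_index_eq univ hu.injOn ?_ fun i _ => ?_
  · rw [card_univ, ← hqdeg, ← degree_eq_natDegree hq.ne_zero]
    refine degree_sub_lt_left ?_ hq.ne_zero (by rw [hq.leadingCoeff, hp.leadingCoeff])
    rw [degree_eq_natDegree hq.ne_zero, degree_eq_natDegree hp.ne_zero, hqdeg, hdeg]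
  · rw [(hroot i).eq_zero, eval_prod]
    exact prod_eq_zero (mem_univ i) (by simp)

theorem prod_one_sub_C_mul_X_eq [IsDomain R] {m : ℕ} {v : R} {u : Fin (m + 1) → R}
    (hu : Function.Injective u) (hroot : ∀ i, (1 + u i) ^ (m + 1) = v * u i ^ m) :
    ∏ i, (1 - C (u i) * X) = (1 + X) ^ (m + 1) - C v * X := by
  have hp : ((X + 1 : R[X]) ^ (m + 1) - C v * X ^ m).Monic := by monicity!
  have hdeg : ((X + 1 : R[X]) ^ (m + 1) - C v * X ^ m).natDegree = m + 1 := by compute_degree!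
  have hfactor := prod_X_sub_C_eq_of_monic hp (hdeg.trans (Fintype.card_fin _).symm) hu fun i => by
    simp [add_comm _ (1 : R), hroot i]
  have h := reflect_prod_X_sub_C univ u
  rw [hfactor, card_univ, Fintype.card_fin, reflect_sub, reflect_X_add_one_pow, reflect_C_mul_X_pow,
    revAt_le (by omega), show m + 1 - m = 1 by omega, pow_one] at h
  rw [← h, add_comm]

theorem sum_C_mul_X_mul_prod_erase {ι : Type*} [DecidableEq ι] (s : Finset ι) (u : ι → R) :
    ∑ i ∈ s, C (u i) * X * ∏ l ∈ s.erase i, (1 - C (u l) * X)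
      = -(X * derivative (∏ i ∈ s, (1 - C (u i) * X))) := by
  rw [derivative_prod_finset, mul_sum, ← sum_neg_distrib]
  refine sum_congr rfl fun i _ => ?_
  simp only [derivative_sub, derivative_one, derivative_C_mul_X, zero_sub]
  ring

theorem sum_C_mul_X_mul_prod_erase_eq [IsDomain R] {m : ℕ} {v : R} {u : Fin (m + 1) → R}
    (hu : Function.Injective u) (hroot : ∀ i, (1 + u i) ^ (m + 1) = v * u i ^ m) :
    ∑ i, C (u i) * X * ∏ l ∈ univ.erase i, (1 - C (u l) * X)
      = (1 + X) ^ m * (1 - C (m : R) * X) - ((1 + X) ^ (m + 1) - C v * X) := by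
  rw [sum_C_mul_X_mul_prod_erase, prod_one_sub_C_mul_X_eq hu hroot]
  simp only [derivative_sub, derivative_pow, derivative_add, derivative_one, derivative_X,
    derivative_C_mul_X, Nat.add_sub_cancel, map_natCast]
  push_cast
  ring

end Polynomial

namespace PowerSeries

variable {R : Type*} [CommRing R]

theorem coeff_one_add_X_pow (n k : ℕ) : coeff k ((1 + X : R⟦X⟧) ^ n) = n.choose k := by
  rw [← Polynomial.coe_X, ← Polynomial.coe_one, ← Polynomial.coe_add, ← Polynomial.coe_pow,
    Polynomial.coeff_coe, Polynomial.coeff_one_add_X_pow]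

theorem mk_pow_mul_one_sub_C_mul_X (a : R) : mk (a ^ ·) * (1 - C a * X) = 1 := by
  simpa [rescale_mk] using congrArg (rescale a) (mk_one_mul_one_sub_eq_one R)

theorem coeff_one_add_X_pow_mul_mk_pow_sub_one (N k : ℕ) (a : R) :
    coeff k ((1 + X) ^ N * (mk (a ^ ·) - 1)) = ∑ j ∈ Icc 1 k, (N.choose (k - j) : R) * a ^ j := by
  have h : coeff k (mk (a ^ ·) * (1 + X) ^ N) = ∑ j ∈ range (k + 1), a ^ j * N.choose (k - j) := by
    rw [coeff_mul, Nat.sum_antidiagonal_eq_sum_range_succ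
      (fun i j => coeff i (mk (a ^ ·)) * coeff j ((1 + X : R⟦X⟧) ^ N))]
    simp [coeff_one_add_X_pow]
  rw [mul_sub, mul_one, map_sub, mul_comm, h, coeff_one_add_X_pow, range_eq_Ico,
    sum_eq_sum_Ico_succ_bot (by omega), ← Finset.Ico_add_one_right_eq_Icc]
  simp [mul_comm]

theorem sum_mk_pow_sub_one_mul_prod {ι : Type*} [DecidableEq ι] (s : Finset ι) (u : ι → R) :
    (∑ i ∈ s, (mk (u i ^ ·) - 1)) * ∏ i ∈ s, (1 - C (u i) * X)
      = ∑ i ∈ s, C (u i) * X * ∏ l ∈ s.erase i, (1 - C (u l) * X) := by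
  rw [sum_mul]
  refine sum_congr rfl fun i hi => ?_
  rw [← mul_prod_erase s _ hi, ← mul_assoc]
  congr 1
  linear_combination mk_pow_mul_one_sub_C_mul_X (u i)

variable {K : Type*} [Field K]

theorem coeff_one_sub_mul_X_mul_pow_mul_inv (m s : ℕ) :
    coeff s ((1 - C (m : K) * X) * ((1 + X) ^ (m + 1)) ^ s * (1 + X)⁻¹)
      = if s = 0 then 1 else 0 := by
  rcases s with _ | s
  · simp [coeff_zero_eq_constantCoeff]
  have hY : ((1 + X : K⟦X⟧) ^ (m + 1)) ^ (s + 1) * (1 + X)⁻¹ = (1 + X) ^ (m * (s + 1) + s) := by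
    rw [← pow_mul, show (m + 1) * (s + 1) = m * (s + 1) + s + 1 by ring, pow_succ, mul_assoc,
      PowerSeries.mul_inv_cancel _ (by simp), mul_one]
  rw [mul_assoc, hY, sub_mul, one_mul, map_sub, mul_assoc, coeff_C_mul, coeff_succ_X_mul,
    coeff_one_add_X_pow, coeff_one_add_X_pow, Nat.choose_mul_add_succ]
  simp

theorem coeff_mul_inv_one_add_X_pow_sub_C_mul_X (m k : ℕ) (v : K) :
    coeff k ((1 + X) ^ ((m + 1) * k + m) * (1 - C (m : K) * X)
      * ((1 + X) ^ (m + 1) - C v * X)⁻¹) = v ^ k := by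
  set Y : K⟦X⟧ := 1 + X
  set G : K⟦X⟧ := Y ^ (m + 1) - C v * X
  set A : K⟦X⟧ := 1 - C (m : K) * X
  set T := ∑ i ∈ range (k + 1), (Y ^ (m + 1)) ^ i * (C v * X) ^ (k - i)
  have hY : Y * Y⁻¹ = 1 := PowerSeries.mul_inv_cancel _ (by simp [Y])
  have hG : G * G⁻¹ = 1 := PowerSeries.mul_inv_cancel _ (by simp [G, Y])
  have hT : T * G = (Y ^ (m + 1)) ^ (k + 1) - (C v * X) ^ (k + 1) := by
    simpa using geom_sum₂_mul (Y ^ (m + 1)) (C v * X) (k + 1)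
  -- `1/G = Y^(-(m+1)) ∑ᵣ (vX/Y^(m+1))^r`, truncated after `r = k`
  have hsplit : Y ^ ((m + 1) * k + m) * A * G⁻¹
      = A * Y⁻¹ * T + X ^ (k + 1) * (C v ^ (k + 1) * A * Y⁻¹ * G⁻¹) := by
    clear_value Y G A T
    linear_combination -(A * Y⁻¹ * G⁻¹) * hT + (A * Y⁻¹ * T) * hG
      - (A * G⁻¹ * Y ^ ((m + 1) * k + m)) * hY
  have hterm : ∀ i ∈ range (k + 1),
      coeff k (A * Y⁻¹ * ((Y ^ (m + 1)) ^ i * (C v * X) ^ (k - i)))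
        = if i = 0 then v ^ k else 0 := by
    intro i hi
    rw [show A * Y⁻¹ * ((Y ^ (m + 1)) ^ i * (C v * X) ^ (k - i))
        = C (v ^ (k - i)) * (X ^ (k - i) * (A * (Y ^ (m + 1)) ^ i * Y⁻¹)) by rw [map_pow]; ring,
      coeff_C_mul, coeff_X_pow_mul', if_pos (Nat.sub_le k i),
      Nat.sub_sub_self (mem_range_succ_iff.mp hi), coeff_one_sub_mul_X_mul_pow_mul_inv]
    split_ifs with h <;> simp [h]
  rw [hsplit, map_add, coeff_X_pow_mul', if_neg (by omega), add_zero, mul_sum, map_sum,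
    sum_congr rfl hterm]
  simp

theorem sum_mk_pow_sub_one_eq {m : ℕ} {v : K} {u : Fin (m + 1) → K}
    (hu : Function.Injective u) (hroot : ∀ i, (1 + u i) ^ (m + 1) = v * u i ^ m) :
    ∑ i, (mk (u i ^ ·) - 1)
      = (1 + X) ^ m * (1 - C (m : K) * X) * ((1 + X) ^ (m + 1) - C v * X)⁻¹ - 1 := by
  classical
  have hprod := congrArg Polynomial.coeToPowerSeries.ringHom
    (Polynomial.prod_one_sub_C_mul_X_eq hu hroot)
  have hsum := congrArg Polynomial.coeToPowerSeries.ringHom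
    (Polynomial.sum_C_mul_X_mul_prod_erase_eq hu hroot)
  simp only [map_prod, map_sum, map_sub, map_mul, map_one, map_pow, map_add,
    Polynomial.coeToPowerSeries.ringHom_apply, Polynomial.coe_C, Polynomial.coe_X] at hprod hsum
  have hG : constantCoeff ((1 + X : K⟦X⟧) ^ (m + 1) - C v * X) ≠ 0 := by simp
  have h := sum_mk_pow_sub_one_mul_prod univ u
  rw [hprod, hsum] at h
  rw [eq_sub_iff_add_eq, eq_mul_inv_iff_mul_eq hG]
  linear_combination h

end PowerSeries

open PowerSeries in
theorem sum_K_at_roots_general (F : Type*) [Field F] (m : ℕ)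
    (E : Type*) [Field E] (φ : RatFunc F →+* E)
    (u : Fin (m + 1) → E) (hinj : Function.Injective u)
    (hroot : ∀ i, (1 + u i) ^ (m + 1)
      = φ ((1 + RatFunc.X) ^ (m + 1) / RatFunc.X ^ m) * (u i) ^ m)
    (k : ℕ) :
    ∑ i : Fin (m + 1), ∑ j ∈ Finset.Icc 1 k,
        (Nat.choose ((m + 1) * k) (k - j) : E) * (u i) ^ j
      = φ ((1 + RatFunc.X) ^ (m + 1) / RatFunc.X ^ m) ^ k
        - (Nat.choose ((m + 1) * k) k : E) := by
  set v := φ ((1 + RatFunc.X) ^ (m + 1) / RatFunc.X ^ m)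
  calc _ = coeff k ((1 + X) ^ ((m + 1) * k) * ∑ i, (PowerSeries.mk (u i ^ ·) - 1)) := by
        simp only [mul_sum, map_sum, coeff_one_add_X_pow_mul_mk_pow_sub_one]
    _ = coeff k ((1 + X) ^ ((m + 1) * k + m) * (1 - C (m : E) * X)
          * ((1 + X) ^ (m + 1) - C v * X)⁻¹) - coeff k ((1 + X) ^ ((m + 1) * k)) := by
        rw [sum_mk_pow_sub_one_eq hinj hroot, ← map_sub]
        congr 1
        ring
    _ = v ^ k - ((m + 1) * k).choose k := by
        rw [coeff_mul_inv_one_add_X_pow_sub_C_mul_X, coeff_one_add_X_pow]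

/-- Let `m ≥ 1`, `F` a field of characteristic zero, `v = (1+u)^{m+1} u^{−m}`, and let
`u_0 = u, u_1, …, u_m` be the `m+1` distinct roots of `(1+U)^{m+1} − v U^m` in a splitting
field over `F(u)`.  Then for every `k ≥ 1`,
`∑_{i=0}^{m} ∑_{j=1}^{k} binom((m+1)k, k−j) u_i^j = v^k − binom((m+1)k, k)`. -/
theorem sum_K_at_roots (F : Type*) [Field F] [CharZero F] (m : ℕ) (hm : 1 ≤ m)
    (E : Type*) [Field E] (φ : RatFunc F →+* E)
    (u : Fin (m + 1) → E) (hinj : Function.Injective u)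
    (h0 : u 0 = φ RatFunc.X)
    (hroot : ∀ i, (1 + u i) ^ (m + 1)
      = φ ((1 + RatFunc.X) ^ (m + 1) / RatFunc.X ^ m) * (u i) ^ m)
    (k : ℕ) (hk : 1 ≤ k) :
    ∑ i : Fin (m + 1), ∑ j ∈ Finset.Icc 1 k,
        (Nat.choose ((m + 1) * k) (k - j) : E) * (u i) ^ j
      = φ ((1 + RatFunc.X) ^ (m + 1) / RatFunc.X ^ m) ^ k
        - (Nat.choose ((m + 1) * k) k : E) :=
  sum_K_at_roots_general F m E φ u hinj hroot k
end

section
/- Fix m ≥ 1 and let M ∈ ℚ[[z]] be the unique formal power series satisfying M = 1 + z M^{m+1}. Then exp( Σ_{k≥1} (1/k) binom((m+1)k, k) z^k ) = M^{m+1} in ℚ[[z]]. -/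
/-- The exponential of a formal power series over `ℚ` (intended for series with zero
constant term): the coefficient of `z^N` in `∑_k f^k / k!`. -/
noncomputable def expPS (f : PowerSeries ℚ) : PowerSeries ℚ :=
  PowerSeries.mk fun N =>
    ∑ k ∈ Finset.range (N + 1), (Nat.factorial k : ℚ)⁻¹ * PowerSeries.coeff N (f ^ k)

/-!
Both sides solve `F' = L' F` with constant term `1`, where `L` is the series in the exponent;
for `exp L` this is the chain rule. Put `B = ∑ₖ binom((m+1)k, k) zᵏ = 1 + z L'`. Pascal's rule
and `M^(r+1) = M^r + z M^(m+r+1)` give `[zⁿ] B M^r = binom((m+1)n + r, n)`, whence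
`B (1 - (m+1) z M^m) = 1`. Differentiating `M = 1 + z M^(m+1)` gives
`M' (1 - (m+1) z M^m) = M^(m+1)`, so `M' = B M^(m+1)` and `G = M^(m+1)` satisfies
`z G' = (m+1) z M^m B G = (B - 1) G = z L' G`.
-/

open PowerSeries

namespace PowerSeries

theorem coeff_pow_of_lt {R : Type*} [CommSemiring R] {f : R⟦X⟧} (hf : constantCoeff f = 0)
    {n k : ℕ} (h : n < k) : coeff n (f ^ k) = 0 :=
  coeff_of_lt_order n <| (Nat.cast_lt.mpr h).trans_le (le_order_pow_of_constantCoeff_eq_zero k hf)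

theorem eq_zero_of_derivative_eq_mul_self {R : Type*} [CommRing R] [IsAddTorsionFree R]
    {g H : R⟦X⟧} (hH : d⁄dX R H = g * H) (h0 : constantCoeff H = 0) : H = 0 := by
  ext n
  induction n using Nat.strong_induction_on with
  | _ n ih =>
    cases n with
    | zero => simpa using h0
    | succ n =>
      have hlow : coeff n (g * H) = 0 := by
        rw [coeff_mul]
        refine Finset.sum_eq_zero fun ⟨i, j⟩ hij => ?_
        have hj : j < n + 1 := by rw [Finset.HasAntidiagonal.mem_antidiagonal] at hij; omega
        rw [ih j hj, map_zero, mul_zero]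
      rw [← hH, coeff_derivative, mul_comm, ← Nat.cast_succ, ← nsmul_eq_mul] at hlow
      simpa using (smul_eq_zero.mp hlow).resolve_left n.succ_ne_zero

theorem eq_of_derivative_eq_mul_self {R : Type*} [CommRing R] [IsAddTorsionFree R]
    {g F G : R⟦X⟧} (hF : d⁄dX R F = g * F) (hG : d⁄dX R G = g * G)
    (h0 : constantCoeff F = constantCoeff G) : F = G :=
  sub_eq_zero.mp <| eq_zero_of_derivative_eq_mul_self (g := g)
    (by rw [map_sub, hF, hG, mul_sub]) (by rw [map_sub, h0, sub_self])

end PowerSeries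

theorem expPS_eq_subst_exp {f : ℚ⟦X⟧} (hf : constantCoeff f = 0) :
    expPS f = (exp ℚ).subst f := by
  ext N
  rw [expPS, coeff_mk, coeff_subst' (HasSubst.of_constantCoeff_zero' hf),
    finsum_eq_sum_of_support_subset (s := Finset.range (N + 1))]
  · simp [coeff_exp, div_eq_inv_mul]
  · intro d hd
    by_contra hN
    rw [Finset.coe_range, Set.mem_Iio, not_lt] at hN
    exact hd (by simp only [coeff_pow_of_lt hf hN, smul_zero])

theorem derivative_expPS {f : ℚ⟦X⟧} (hf : constantCoeff f = 0) :
    d⁄dX ℚ (expPS f) = d⁄dX ℚ f * expPS f := by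
  rw [expPS_eq_subst_exp hf, derivative_subst (HasSubst.of_constantCoeff_zero' hf),
    derivative_exp, mul_comm]

theorem constantCoeff_expPS (f : ℚ⟦X⟧) : constantCoeff (expPS f) = 1 := by
  rw [← coeff_zero_eq_constantCoeff_apply, expPS, coeff_mk]
  simp

theorem Nat.succ_mul_choose_add_eq (m n : ℕ) :
    (m + 1) * ((m + 1) * n + m).choose n = ((m + 1) * (n + 1)).choose (n + 1) := by
  have h := Nat.add_one_mul_choose_eq ((m + 1) * n + m) n
  rw [show (m + 1) * n + m + 1 = (m + 1) * (n + 1) by ring] at h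
  exact Nat.eq_of_mul_eq_mul_right n.add_one_pos (by rw [← h]; ring)

noncomputable def chooseSeries (R : Type*) [CommRing R] (m : ℕ) : R⟦X⟧ :=
  mk fun k => (((m + 1) * k).choose k : R)

section FunctionalEquation

variable {R : Type*} [CommRing R] {m : ℕ} {M : R⟦X⟧}

theorem constantCoeff_eq_one_of_eq_one_add_X_mul (hM : M = 1 + X * M ^ (m + 1)) :
    constantCoeff M = 1 := by
  rw [hM]
  simp

theorem pow_succ_eq_of_eq_one_add_X_mul (hM : M = 1 + X * M ^ (m + 1)) (r : ℕ) :
    M ^ (r + 1) = M ^ r + X * M ^ (m + r + 1) := by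
  rw [pow_succ]
  nth_rw 2 [hM]
  ring

theorem coeff_chooseSeries_mul_pow (hM : M = 1 + X * M ^ (m + 1)) (n r : ℕ) :
    coeff n (chooseSeries R m * M ^ r) = (((m + 1) * n + r).choose n : R) := by
  induction n using Nat.strong_induction_on generalizing r with
  | _ n ih =>
    cases n with
    | zero =>
      simp [coeff_zero_eq_constantCoeff_apply, constantCoeff_eq_one_of_eq_one_add_X_mul hM,
        chooseSeries]
    | succ n =>
      induction r with
      | zero => simp [chooseSeries]
      | succ r ihr =>
        rw [pow_succ_eq_of_eq_one_add_X_mul hM, mul_add, mul_left_comm, map_add,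
          coeff_succ_X_mul, ihr, ih n n.lt_succ_self,
          show (m + 1) * n + (m + r + 1) = (m + 1) * (n + 1) + r by ring, ← add_assoc,
          Nat.choose_succ_succ', Nat.cast_add, add_comm]

theorem chooseSeries_mul_one_sub (hM : M = 1 + X * M ^ (m + 1)) :
    chooseSeries R m * (1 - (m + 1 : R⟦X⟧) * X * M ^ m) = 1 := by
  ext n
  cases n with
  | zero => simp [chooseSeries]
  | succ n =>
    have h := coeff_chooseSeries_mul_pow hM n m
    have h2 := congrArg (Nat.cast (R := R)) (Nat.succ_mul_choose_add_eq m n)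
    push_cast at h2
    rw [mul_sub, mul_one, map_sub, show chooseSeries R m * ((m + 1 : R⟦X⟧) * X * M ^ m)
      = C (m + 1 : R) * (X * (chooseSeries R m * M ^ m)) by rw [map_add, map_natCast, map_one]; ring,
      coeff_C_mul, coeff_succ_X_mul, h, h2, chooseSeries, coeff_mk, sub_self, coeff_one,
      if_neg n.add_one_ne_zero]

theorem X_mul_derivative_pow_eq (hM : M = 1 + X * M ^ (m + 1)) :
    X * d⁄dX R (M ^ (m + 1)) = (chooseSeries R m - 1) * M ^ (m + 1) := by
  have hB := chooseSeries_mul_one_sub hM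
  have hD : d⁄dX R M = M ^ (m + 1) + X * ((m + 1 : R⟦X⟧) * M ^ m * d⁄dX R M) := by
    conv_lhs => rw [hM]
    simp
    ring
  rw [derivative_pow]
  push_cast
  linear_combination (chooseSeries R m - 1) * hD - d⁄dX R M * hB

end FunctionalEquation

noncomputable def chooseLogSeries (m : ℕ) : ℚ⟦X⟧ :=
  mk fun k => if k = 0 then 0 else (k : ℚ)⁻¹ * (Nat.choose ((m + 1) * k) k : ℚ)

theorem constantCoeff_chooseLogSeries (m : ℕ) : constantCoeff (chooseLogSeries m) = 0 := by
  rw [← coeff_zero_eq_constantCoeff_apply, chooseLogSeries, coeff_mk, if_pos rfl]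

theorem X_mul_derivative_chooseLogSeries (m : ℕ) :
    X * d⁄dX ℚ (chooseLogSeries m) = chooseSeries ℚ m - 1 := by
  ext n
  cases n with
  | zero => simp [chooseSeries]
  | succ n =>
    rw [coeff_succ_X_mul, coeff_derivative, chooseLogSeries, coeff_mk, if_neg n.add_one_ne_zero,
      map_sub, chooseSeries, coeff_mk, coeff_one, if_neg n.add_one_ne_zero, sub_zero]
    field_simp
    push_cast
    ring

theorem exp_L_eq_M_pow_general (m : ℕ) (M : PowerSeries ℚ)
    (hM : M = 1 + PowerSeries.X * M ^ (m + 1)) :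
    expPS (PowerSeries.mk fun k =>
        if k = 0 then 0 else (k : ℚ)⁻¹ * (Nat.choose ((m + 1) * k) k : ℚ))
      = M ^ (m + 1) := by
  change expPS (chooseLogSeries m) = M ^ (m + 1)
  have hL := constantCoeff_chooseLogSeries m
  refine eq_of_derivative_eq_mul_self (derivative_expPS hL) ?_ ?_
  · refine mul_left_cancel₀ X_ne_zero ?_
    rw [X_mul_derivative_pow_eq hM, ← mul_assoc, X_mul_derivative_chooseLogSeries]
  · rw [constantCoeff_expPS, map_pow, constantCoeff_eq_one_of_eq_one_add_X_mul hM, one_pow]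

/-- Fix `m ≥ 1` and let `M ∈ ℚ[[z]]` be the unique formal power series satisfying
`M = 1 + z M^{m+1}`.  Then `exp( ∑_{k≥1} (1/k) binom((m+1)k, k) z^k ) = M^{m+1}`. -/
theorem exp_L_eq_M_pow (m : ℕ) (hm : 1 ≤ m) (M : PowerSeries ℚ)
    (hM : M = 1 + PowerSeries.X * M ^ (m + 1)) :
    expPS (PowerSeries.mk fun k =>
        if k = 0 then 0 else (k : ℚ)⁻¹ * (Nat.choose ((m + 1) * k) k : ℚ))
      = M ^ (m + 1) :=
  exp_L_eq_M_pow_general m M hM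
end

section
/- Fix m ≥ 1 and let M ∈ ℚ[[z]] be the unique formal power series satisfying M = 1 + z M^{m+1}. Then, in the ring ℚ[u][[z]] of formal power series in z with polynomial coefficients in u, exp( Σ_{k≥1} (z^k/k) Σ_{i=1}^{k} binom((m+1)k, k−i) u^i ) = 1 / (1 − u(M − 1)); equivalently, it equals 1/(1 − z u M^{m+1}). -/
/-!
Put `W = M - 1 = z M^{m+1}`. Lagrange inversion for `M = 1 + z M^{m+1}` gives
`n [z^n] W^d = d binom((m+1)n, n-d)`, so the coefficient of `u^d` in the series `K` under the
exponential is `W^d / d`: `K = -log (1 - uW)`. Rather than composing with `log`, we compare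
`u`-coefficients to get `K' (1 - uW) = (uW)'`; since `E = exp K` satisfies `E' = K' E`, the
product `E (1 - uW)` has derivative `0` and constant term `1`, so it is `1`.
-/

/-- The exponential of a formal power series over `ℚ[u]` (intended for series with zero
constant term): the coefficient of `z^N` in `∑_k f^k / k!`. -/
noncomputable def expPSu (f : PowerSeries (Polynomial ℚ)) : PowerSeries (Polynomial ℚ) :=
  PowerSeries.mk fun N =>
    ∑ k ∈ Finset.range (N + 1),
      (Nat.factorial k : ℚ)⁻¹ • PowerSeries.coeff (R := Polynomial ℚ) N (f ^ k)

open PowerSeries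
open scoped Nat Polynomial

section ExpPartialSum

variable {A : Type*} [CommRing A] [Algebra ℚ A]

noncomputable def expPartialSum (f : A⟦X⟧) (N : ℕ) : A⟦X⟧ :=
  ∑ k ∈ Finset.range N, (k ! : ℚ)⁻¹ • f ^ k

theorem coeff_expPartialSum (f : A⟦X⟧) (N n : ℕ) :
    coeff n (expPartialSum f N)
      = ∑ k ∈ Finset.range N, (k ! : ℚ)⁻¹ • coeff n (f ^ k) := by
  simp only [expPartialSum, map_sum, LinearMap.map_smul_of_tower]

theorem derivative_expPartialSum_succ (f : A⟦X⟧) (N : ℕ) :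
    d⁄dX A (expPartialSum f (N + 1)) = d⁄dX A f * expPartialSum f N := by
  simp only [expPartialSum, Finset.sum_range_succ', map_add, map_sum, Derivation.map_smul_of_tower,
    pow_zero, derivative_one, smul_zero, add_zero, derivative_pow, Finset.mul_sum]
  refine Finset.sum_congr rfl fun k _ => ?_
  rw [Nat.factorial_succ, Nat.cast_mul, mul_inv, mul_smul, add_tsub_cancel_right, Nat.cast_succ,
    mul_assoc, ← nsmul_eq_mul, ← Nat.cast_smul_eq_nsmul ℚ, smul_comm _ ((k + 1 : ℕ) : ℚ),
    smul_smul, Nat.cast_succ, inv_mul_cancel₀ (Nat.cast_add_one_ne_zero k), one_smul,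
    mul_smul_comm, mul_comm]

end ExpPartialSum

section ExpPSu

variable {f : ℚ[X]⟦X⟧}

theorem coeff_expPSu_of_lt (hf : constantCoeff f = 0) {n N : ℕ} (hnN : n < N) :
    coeff n (expPSu f) = coeff n (expPartialSum f N) := by
  rw [expPSu, coeff_mk, coeff_expPartialSum]
  refine Finset.sum_subset (Finset.range_subset_range.mpr hnN) fun k _ hk => ?_
  have hnk : (n : ℕ∞) < (f ^ k).order :=
    lt_of_lt_of_le (by simpa using hk) (le_order_pow_of_constantCoeff_eq_zero k hf)
  rw [coeff_of_lt_order n hnk, smul_zero]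

theorem trunc_expPSu_of_le (hf : constantCoeff f = 0) {n N : ℕ} (hnN : n ≤ N) :
    trunc n (expPSu f) = trunc n (expPartialSum f N) := by
  refine Polynomial.ext fun i => ?_
  simp only [coeff_trunc]
  split_ifs with hi
  · exact coeff_expPSu_of_lt hf (by omega)
  · rfl

theorem constantCoeff_expPSu : constantCoeff (expPSu f) = 1 := by
  simp [expPSu]

theorem derivative_expPSu (hf : constantCoeff f = 0) :
    d⁄dX _ (expPSu f) = d⁄dX _ f * expPSu f := by
  refine PowerSeries.ext fun n => ?_
  calc coeff n (d⁄dX _ (expPSu f))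
      = coeff n (d⁄dX _ (expPartialSum f (n + 2))) := by
        rw [coeff_derivative, coeff_derivative, coeff_expPSu_of_lt hf (Nat.lt_succ_self (n + 1))]
    _ = coeff n (d⁄dX _ f * expPartialSum f (n + 1)) := by rw [derivative_expPartialSum_succ]
    _ = coeff n (d⁄dX _ f * expPSu f) := by
        rw [coeff_mul_eq_coeff_trunc_mul_trunc _ _ n.lt_succ_self,
          coeff_mul_eq_coeff_trunc_mul_trunc _ (expPSu f) n.lt_succ_self,
          trunc_expPSu_of_le hf le_rfl]

end ExpPSu

theorem mul_one_sub_eq_one_of_derivative {R : Type*} [CommRing R] [IsAddTorsionFree R]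
    {E L V : R⟦X⟧} (hE : d⁄dX R E = d⁄dX R L * E) (hL : d⁄dX R L * (1 - V) = d⁄dX R V)
    (hE0 : constantCoeff E = 1) (hV0 : constantCoeff V = 0) : E * (1 - V) = 1 := by
  refine derivative.ext ?_ (by simp [hE0, hV0])
  rw [Derivation.leibniz, map_sub, derivative_one, hE, smul_eq_mul, smul_eq_mul]
  linear_combination E * hL

section Lagrange

variable {K : Type*} [Field K] [CharZero K]

theorem derivative_inv_natCast_smul_pow_succ (f : K⟦X⟧) (j : ℕ) :
    d⁄dX K (((j + 1 : ℕ) : K)⁻¹ • f ^ (j + 1)) = f ^ j * d⁄dX K f := by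
  rw [Derivation.map_smul, derivative_pow, Nat.add_sub_cancel, smul_eq_C_mul,
    ← map_natCast (C (R := K)), ← mul_assoc, ← mul_assoc, ← map_mul,
    inv_mul_cancel₀ (Nat.cast_ne_zero.mpr j.succ_ne_zero), map_one, one_mul]

variable {m : ℕ} {M : K⟦X⟧}

theorem coeff_pow_of_eq_one_add_X_mul_pow (hM : M = 1 + X * M ^ (m + 1)) (n r : ℕ) :
    ((m + 1) * n + r : K) * coeff n (M ^ r) = r * ((m + 1) * n + r).choose n := by
  induction n generalizing r with
  | zero =>
    have hM0 : constantCoeff M = 1 := by rw [hM]; simp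
    simp [hM0]
  | succ n ih =>
    induction r with
    | zero => simp [coeff_one]
    | succ r ihr =>
      have hsplit : M ^ (r + 1) = M ^ r + X * M ^ (r + 1 + m) := calc
        M ^ (r + 1) = M ^ r * (1 + X * M ^ (m + 1)) := by rw [← hM, pow_succ]
        _ = M ^ r + X * M ^ (r + 1 + m) := by ring
      have hN := ih (r + 1 + m)
      rw [show (m + 1) * n + (r + 1 + m) = (m + 1) * (n + 1) + r by ring] at hN
      have hpos : (((m + 1) * (n + 1) + r : ℕ) : K) ≠ 0 := Nat.cast_ne_zero.mpr (by positivity)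
      set N := (m + 1) * (n + 1) + r with hN_def
      have hpascal : ((N + 1).choose (n + 1) : K) = N.choose n + N.choose (n + 1) := by
        exact_mod_cast Nat.choose_succ_succ N n
      have hratio : (N.choose (n + 1) : K) * (n + 1) = N.choose n * (m * (n + 1) + r + 1) := by
        have h := Nat.choose_succ_right_eq N n
        rw [show N - n = m * (n + 1) + r + 1 by rw [hN_def, add_mul, one_mul]; omega] at h
        exact_mod_cast h
      rw [show (m + 1) * (n + 1) + (r + 1) = N + 1 by ring, hsplit, map_add, coeff_succ_X_mul]
      apply mul_left_cancel₀ hpos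
      simp only [N] at hN ihr hratio hpascal ⊢
      push_cast at hN ihr hratio hpascal ⊢
      linear_combination (((m : K) + 1) * ((n : K) + 1) + r + 1) * (ihr + hN)
        - (((m : K) + 1) * ((n : K) + 1) + r) * ((r : K) + 1) * hpascal - (m + 1) * hratio

theorem coeff_X_mul_pow_pow_of_eq_one_add_X_mul_pow (hM : M = 1 + X * M ^ (m + 1)) {n j : ℕ}
    (hjn : j ≤ n) :
    (n : K) * coeff n ((X * M ^ (m + 1)) ^ j) = j * ((m + 1) * n).choose (n - j) := by
  have h := coeff_pow_of_eq_one_add_X_mul_pow hM (n - j) ((m + 1) * j)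
  rw [← mul_add, Nat.sub_add_cancel hjn] at h
  rw [mul_pow, ← pow_mul, coeff_X_pow_mul', if_pos hjn]
  apply mul_left_cancel₀ (Nat.cast_add_one_ne_zero m : (m + 1 : K) ≠ 0)
  push_cast [Nat.cast_sub hjn] at h ⊢
  linear_combination h

end Lagrange

section PolyCoeff

variable {R : Type*} [CommSemiring R]

-- The coefficient of `u^d`, reading `R[X]⟦X⟧` as `R[u][[z]]`.
noncomputable def polyCoeff (d : ℕ) : R[X]⟦X⟧ →+ R⟦X⟧ where
  toFun F := mk fun n => (coeff n F).coeff d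
  map_zero' := by ext; simp
  map_add' F G := by ext; simp

@[simp]
theorem coeff_polyCoeff (d n : ℕ) (F : R[X]⟦X⟧) :
    coeff n (polyCoeff d F) = (coeff n F).coeff d :=
  coeff_mk (R := R) n fun n => (coeff n F).coeff d

theorem ext_polyCoeff {F G : R[X]⟦X⟧} (h : ∀ d, polyCoeff d F = polyCoeff d G) :
    F = G :=
  PowerSeries.ext fun n => Polynomial.ext fun d => by
    rw [← coeff_polyCoeff, ← coeff_polyCoeff, h]

theorem polyCoeff_derivative (d : ℕ) (F : R[X]⟦X⟧) :
    polyCoeff d (d⁄dX _ F) = d⁄dX R (polyCoeff d F) := by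
  ext n
  rw [coeff_polyCoeff, coeff_derivative, coeff_derivative, coeff_polyCoeff, ← Nat.cast_succ,
    ← Nat.cast_succ, Polynomial.coeff_mul_natCast]

theorem polyCoeff_mul_map_C (d : ℕ) (F : R[X]⟦X⟧) (G : R⟦X⟧) :
    polyCoeff d (F * map Polynomial.C G) = polyCoeff d F * G := by
  ext n
  simp [coeff_mul]

theorem polyCoeff_map_C (d : ℕ) (G : R⟦X⟧) :
    polyCoeff d (map Polynomial.C G) = if d = 0 then G else 0 := by
  ext n
  split_ifs with hd <;> simp [hd, Polynomial.coeff_C]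

theorem polyCoeff_zero_C_X_mul (F : R[X]⟦X⟧) : polyCoeff 0 (C Polynomial.X * F) = 0 := by
  ext n
  simp

theorem polyCoeff_succ_C_X_mul (d : ℕ) (F : R[X]⟦X⟧) :
    polyCoeff (d + 1) (C Polynomial.X * F) = polyCoeff d F := by
  ext n
  simp

end PolyCoeff

-- The series `K` of the header.
noncomputable def logSeries (m : ℕ) : ℚ[X]⟦X⟧ :=
  PowerSeries.mk fun k =>
    if k = 0 then 0 else
      (k : ℚ)⁻¹ • ∑ i ∈ Finset.Icc 1 k,
        (Nat.choose ((m + 1) * k) (k - i) : Polynomial ℚ) * Polynomial.X ^ i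

section LogSeries

variable {m : ℕ} {M : ℚ⟦X⟧}

theorem polyCoeff_logSeries (hM : M = 1 + X * M ^ (m + 1)) (d : ℕ) :
    polyCoeff d (logSeries m) = (d : ℚ)⁻¹ • (X * M ^ (m + 1)) ^ d := by
  refine PowerSeries.ext fun n => ?_
  have hsum :
      (∑ i ∈ Finset.Icc 1 n, (((m + 1) * n).choose (n - i) : ℚ[X]) * Polynomial.X ^ i).coeff d
        = if d ∈ Finset.Icc 1 n then (((m + 1) * n).choose (n - d) : ℚ) else 0 := by
    simp [Polynomial.finsetSum_coeff, Polynomial.coeff_X_pow]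
  rw [coeff_polyCoeff, logSeries, coeff_mk, coeff_smul, smul_eq_mul]
  by_cases hd : d = 0
  · subst hd
    split_ifs <;> simp [hsum]
  by_cases hdn : d ≤ n
  · have hn : n ≠ 0 := by omega
    rw [if_neg hn, Polynomial.coeff_smul, hsum, if_pos (Finset.mem_Icc.mpr ⟨by omega, hdn⟩),
      smul_eq_mul]
    have h := coeff_X_mul_pow_pow_of_eq_one_add_X_mul_pow hM hdn
    field_simp
    linear_combination -h
  · rw [mul_pow, ← pow_mul, coeff_X_pow_mul', if_neg hdn, mul_zero]
    split_ifs
    · rfl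
    · rw [Polynomial.coeff_smul, hsum, if_neg (by simp; omega), smul_zero]

theorem derivative_logSeries_mul_one_sub (hM : M = 1 + X * M ^ (m + 1)) :
    d⁄dX _ (logSeries m) * (1 - C Polynomial.X * map Polynomial.C (X * M ^ (m + 1)))
      = d⁄dX _ (C Polynomial.X * map Polynomial.C (X * M ^ (m + 1))) := by
  refine ext_polyCoeff fun d => ?_
  rw [mul_sub, mul_one, mul_left_comm, map_sub, polyCoeff_derivative, polyCoeff_derivative,
    polyCoeff_logSeries hM]
  rcases d with _ | j
  · simp [polyCoeff_zero_C_X_mul]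
  rw [polyCoeff_succ_C_X_mul, polyCoeff_succ_C_X_mul, polyCoeff_mul_map_C, polyCoeff_derivative,
    polyCoeff_logSeries hM, polyCoeff_map_C, derivative_inv_natCast_smul_pow_succ]
  rcases j with _ | j
  · simp
  · rw [derivative_inv_natCast_smul_pow_succ, if_neg j.succ_ne_zero, map_zero]
    ring

end LogSeries

theorem exp_K_eq_inv_general (m : ℕ) (M : PowerSeries ℚ)
    (hM : M = 1 + PowerSeries.X * M ^ (m + 1)) :
    expPSu (PowerSeries.mk fun k =>
          if k = 0 then 0 else
            (k : ℚ)⁻¹ • ∑ i ∈ Finset.Icc 1 k,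
              (Nat.choose ((m + 1) * k) (k - i) : Polynomial ℚ) * Polynomial.X ^ i)
        * (1 - PowerSeries.C (R := Polynomial ℚ) Polynomial.X
              * (PowerSeries.map (Polynomial.C : ℚ →+* Polynomial ℚ) M - 1)) = 1 ∧
      expPSu (PowerSeries.mk fun k =>
          if k = 0 then 0 else
            (k : ℚ)⁻¹ • ∑ i ∈ Finset.Icc 1 k,
              (Nat.choose ((m + 1) * k) (k - i) : Polynomial ℚ) * Polynomial.X ^ i)
        * (1 - PowerSeries.X * PowerSeries.C (R := Polynomial ℚ) Polynomial.X
              * (PowerSeries.map (Polynomial.C : ℚ →+* Polynomial ℚ) M) ^ (m + 1)) = 1 := by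
  have hlog0 : constantCoeff (logSeries m) = 0 := by simp [logSeries]
  have key :
      expPSu (logSeries m) * (1 - C Polynomial.X * map Polynomial.C (X * M ^ (m + 1))) = 1 :=
    mul_one_sub_eq_one_of_derivative (derivative_expPSu hlog0)
      (derivative_logSeries_mul_one_sub hM) constantCoeff_expPSu (by simp)
  have hM_sub_one : map Polynomial.C M - 1 = map Polynomial.C (X * M ^ (m + 1)) := by
    nth_rewrite 1 [hM]
    rw [map_add, map_one, add_sub_cancel_left]
  have hX_mul : X * C Polynomial.X * map Polynomial.C M ^ (m + 1)
      = C Polynomial.X * map Polynomial.C (X * M ^ (m + 1)) := by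
    rw [map_mul, map_pow, map_X]
    ring
  exact ⟨hM_sub_one ▸ key, hX_mul ▸ key⟩

/-- Fix `m ≥ 1` and let `M ∈ ℚ[[z]]` be the unique formal power series satisfying
`M = 1 + z M^{m+1}`.  Then, in `ℚ[u][[z]]`,
`exp( ∑_{k≥1} (z^k/k) ∑_{i=1}^k binom((m+1)k, k−i) u^i ) = 1/(1 − u(M−1))`;
equivalently it equals `1/(1 − z u M^{m+1})`.  (The two right-hand sides are expressed
multiplicatively: the series times the denominator equals `1`.) -/
theorem exp_K_eq_inv (m : ℕ) (hm : 1 ≤ m) (M : PowerSeries ℚ)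
    (hM : M = 1 + PowerSeries.X * M ^ (m + 1)) :
    expPSu (PowerSeries.mk fun k =>
          if k = 0 then 0 else
            (k : ℚ)⁻¹ • ∑ i ∈ Finset.Icc 1 k,
              (Nat.choose ((m + 1) * k) (k - i) : Polynomial ℚ) * Polynomial.X ^ i)
        * (1 - PowerSeries.C (R := Polynomial ℚ) Polynomial.X
              * (PowerSeries.map (Polynomial.C : ℚ →+* Polynomial ℚ) M - 1)) = 1 ∧
      expPSu (PowerSeries.mk fun k =>
          if k = 0 then 0 else
            (k : ℚ)⁻¹ • ∑ i ∈ Finset.Icc 1 k,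
              (Nat.choose ((m + 1) * k) (k - i) : Polynomial ℚ) * Polynomial.X ^ i)
        * (1 - PowerSeries.X * PowerSeries.C (R := Polynomial ℚ) Polynomial.X
              * (PowerSeries.map (Polynomial.C : ℚ →+* Polynomial ℚ) M) ^ (m + 1)) = 1 :=
  exp_K_eq_inv_general m M hM
end
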